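/- arXiv:math/0607174 — 5 statements merged into one kernel-verified Lean document; each statement's English description precedes it below -/
import Mathlib

section
/- Let n ≥ 4 and let B = (B',B'') be a partition of {1,…,n} into disjoint sets with #B' ≥ 2 and #B'' ≥ 2. Then the set {P ∈ ℚ^P : P ≥ 0 and P − E^{B'} ∈ range(deg*)} equals the set {(1−s)·E^{B'} + s·E^{B''} + deg*(v) : s ∈ ℚ, 0 ≤ s ≤ 1, v ∈ ℚ^n with deg*(v) ≥ 0}. (This is the description of the 'positive fiber' π^{-1}(c^B) ∩ ℚ^P_{≥0} as the line segment from E^{B'} to E^{B''} plus the cone σ, Lemma 6.1 of the paper.) -/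
/-- The index set of the Plücker coordinates of `Gr(2,n)`: ordered pairs `i < j`
in `Fin n`, representing the 2-element subsets `{i,j}` of `{1,…,n}`. -/
abbrev PluckerPairs (n : ℕ) := {q : Fin n × Fin n // q.1 < q.2}

/-- The weight map `deg* : ℚ^n → ℚ^P`, determined by `deg*(e^i) = Σ_{j ≠ i} E^{ij}`;
equivalently `deg*(v)_{ij} = v_i + v_j`. -/
def degStar (n : ℕ) : (Fin n → ℚ) →ₗ[ℚ] (PluckerPairs n → ℚ) where
  toFun v := fun q => v q.1.1 + v q.1.2
  map_add' u v := by funext q; simp [Pi.add_apply]; ring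
  map_smul' c v := by funext q; simp [Pi.smul_apply, smul_eq_mul]; ring

/-- `E^S = Σ_{{i,j} ⊆ S, i ≠ j} E^{ij}`, i.e. the indicator vector of the pairs
contained in `S`. -/
def ESet {n : ℕ} (S : Finset (Fin n)) : PluckerPairs n → ℚ :=
  fun q => if q.1.1 ∈ S ∧ q.1.2 ∈ S then 1 else 0

/-- Lemma 6.1 (first part): for a partition `B = (B', B'')` of `{1,…,n}` with both
parts of size at least 2, the "positive fiber" `π^{-1}(c^B) ∩ ℚ^P_{≥0}` equals the
line segment from `E^{B'}` to `E^{B''}` plus the cone `σ = im(deg*) ∩ ℚ^P_{≥0}`. -/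
theorem positive_fiber_eq_segment_plus_cone
    (n : ℕ) (hn : 4 ≤ n) (B' B'' : Finset (Fin n))
    (hdisj : Disjoint B' B'') (hcover : B' ∪ B'' = Finset.univ)
    (hB' : 2 ≤ B'.card) (hB'' : 2 ≤ B''.card) :
    {P : PluckerPairs n → ℚ |
        (∀ q, 0 ≤ P q) ∧ P - ESet B' ∈ Set.range (degStar n)} =
      {P : PluckerPairs n → ℚ | ∃ s : ℚ, ∃ v : Fin n → ℚ,
        0 ≤ s ∧ s ≤ 1 ∧ (∀ q, 0 ≤ degStar n v q) ∧
        P = (1 - s) • ESet B' + s • ESet B'' + degStar n v} := by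
  classical
  have hmem : ∀ i : Fin n, i ∈ B'' ↔ i ∉ B' := by
    intro i
    constructor
    · intro h hB
      exact (Finset.disjoint_left.mp hdisj) hB h
    · intro h
      have hi : i ∈ B' ∪ B'' := hcover ▸ Finset.mem_univ i
      rcases Finset.mem_union.mp hi with h' | h'
      · exact absurd h' h
      · exact h'
  set u : Fin n → ℚ := fun i => if i ∈ B' then -(1/2) else 1/2 with hu_def
  have hu1 : ∀ i, i ∈ B' → u i = -(1/2) := fun i h => by simp [hu_def, h]
  have hu2 : ∀ i, i ∉ B' → u i = 1/2 := fun i h => by simp [hu_def, h]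
  have hdeg : ∀ (x : Fin n → ℚ) (q : PluckerPairs n),
      degStar n x q = x q.1.1 + x q.1.2 := fun _ _ => rfl
  have hE' : ∀ q : PluckerPairs n,
      ESet B' q = if q.1.1 ∈ B' ∧ q.1.2 ∈ B' then 1 else 0 := fun _ => rfl
  have hE'' : ∀ q : PluckerPairs n,
      ESet B'' q = if q.1.1 ∉ B' ∧ q.1.2 ∉ B' then 1 else 0 := by
    intro q
    by_cases h1 : q.1.1 ∈ B' <;> by_cases h2 : q.1.2 ∈ B' <;>
      simp [ESet, hmem, h1, h2]
  have hu : ∀ q : PluckerPairs n, degStar n u q = ESet B'' q - ESet B' q := by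
    intro q
    rw [hdeg, hE', hE'']
    by_cases h1 : q.1.1 ∈ B' <;> by_cases h2 : q.1.2 ∈ B'
    · rw [hu1 _ h1, hu1 _ h2]; simp [h1, h2]; norm_num
    · rw [hu1 _ h1, hu2 _ h2]; simp [h1, h2]
    · rw [hu2 _ h1, hu1 _ h2]; simp [h1, h2]
    · rw [hu2 _ h1, hu2 _ h2]; simp [h1, h2]; norm_num
  ext P
  simp only [Set.mem_setOf_eq]
  constructor
  · rintro ⟨hP, w, hw⟩
    have hPq : ∀ q, P q = ESet B' q + (w q.1.1 + w q.1.2) := by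
      intro q
      have h := congrFun hw q
      rw [hdeg] at h
      simp only [Pi.sub_apply] at h
      linarith
    have hcrossPos : ∀ q : PluckerPairs n, ¬(q.1.1 ∈ B' ∧ q.1.2 ∈ B') →
        0 ≤ w q.1.1 + w q.1.2 := by
      intro q h
      have hp := hP q
      rw [hPq q, hE' q, if_neg h] at hp
      linarith
    have hne : ∀ a b : Fin n, a ∈ B' → b ∉ B' → 0 ≤ w a + w b := by
      intro a b ha hb
      have hab : a ≠ b := fun h => hb (h ▸ ha)
      rcases lt_or_gt_of_ne hab with h | h
      · have := hcrossPos ⟨(a, b), h⟩ (fun hc => hb hc.2)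
        simpa using this
      · have := hcrossPos ⟨(b, a), h⟩ (fun hc => hb hc.1)
        simp only at this
        linarith
    set F : Finset (PluckerPairs n) :=
      Finset.univ.filter (fun q => q.1.1 ∈ B' ∧ q.1.2 ∈ B') with hF_def
    have hFmem : ∀ q : PluckerPairs n, q ∈ F ↔ q.1.1 ∈ B' ∧ q.1.2 ∈ B' := by
      intro q; simp [hF_def]
    obtain ⟨a, ha, b, hb, hab⟩ := Finset.one_lt_card.mp (by omega : 1 < B'.card)
    have hFne : F.Nonempty := by
      rcases lt_or_gt_of_ne hab with h | h
      · exact ⟨⟨(a, b), h⟩, (hFmem _).mpr ⟨ha, hb⟩⟩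
      · exact ⟨⟨(b, a), h⟩, (hFmem _).mpr ⟨hb, ha⟩⟩
    set s : ℚ := max 0 (F.sup' hFne (fun q => -(w q.1.1 + w q.1.2))) with hs_def
    have hs0 : 0 ≤ s := le_max_left _ _
    have hs1 : s ≤ 1 := by
      apply max_le (by norm_num)
      apply Finset.sup'_le
      intro q hq
      obtain ⟨h1, h2⟩ := (hFmem q).mp hq
      have hp := hP q
      rw [hPq q, hE' q, if_pos ⟨h1, h2⟩] at hp
      linarith
    have hsB' : ∀ q : PluckerPairs n, q.1.1 ∈ B' → q.1.2 ∈ B' →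
        -(w q.1.1 + w q.1.2) ≤ s := fun q h1 h2 =>
      le_trans (Finset.le_sup' (fun q : PluckerPairs n => -(w q.1.1 + w q.1.2)) ((hFmem q).mpr ⟨h1, h2⟩)) (le_max_right _ _)
    have hsB'' : ∀ q : PluckerPairs n, q.1.1 ∉ B' → q.1.2 ∉ B' →
        s ≤ w q.1.1 + w q.1.2 := by
      intro q h1 h2
      apply max_le (hcrossPos q (fun hc => h1 hc.1))
      apply Finset.sup'_le
      intro p hp
      obtain ⟨hp1, hp2⟩ := (hFmem p).mp hp
      have c1 := hne p.1.1 q.1.1 hp1 h1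
      have c2 := hne p.1.2 q.1.2 hp2 h2
      linarith
    refine ⟨s, fun i => w i - s * u i, hs0, hs1, ?_, ?_⟩
    · intro q
      rw [hdeg]
      by_cases h1 : q.1.1 ∈ B' <;> by_cases h2 : q.1.2 ∈ B'
      · rw [hu1 _ h1, hu1 _ h2]
        have := hsB' q h1 h2
        linarith
      · rw [hu1 _ h1, hu2 _ h2]
        have := hcrossPos q (fun hc => h2 hc.2)
        linarith
      · rw [hu2 _ h1, hu1 _ h2]
        have := hcrossPos q (fun hc => h1 hc.1)
        linarith
      · rw [hu2 _ h1, hu2 _ h2]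
        have := hsB'' q h1 h2
        linarith
    · funext q
      simp only [Pi.add_apply, Pi.smul_apply, smul_eq_mul, hdeg]
      by_cases h1 : q.1.1 ∈ B' <;> by_cases h2 : q.1.2 ∈ B'
      · rw [hPq q, hE' q, hE'' q, if_pos ⟨h1, h2⟩, if_neg (by tauto),
          hu1 _ h1, hu1 _ h2]
        ring
      · rw [hPq q, hE' q, hE'' q, if_neg (by tauto), if_neg (by tauto),
          hu1 _ h1, hu2 _ h2]
        ring
      · rw [hPq q, hE' q, hE'' q, if_neg (by tauto), if_neg (by tauto),
          hu2 _ h1, hu1 _ h2]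
        ring
      · rw [hPq q, hE' q, hE'' q, if_neg (by tauto), if_pos ⟨h1, h2⟩,
          hu2 _ h1, hu2 _ h2]
        ring
  · rintro ⟨s, v, hs0, hs1, hv, rfl⟩
    constructor
    · intro q
      have e1 : (0:ℚ) ≤ ESet B' q := by rw [hE' q]; split <;> norm_num
      have e2 : (0:ℚ) ≤ ESet B'' q := by rw [hE'' q]; split <;> norm_num
      have e3 := hv q
      simp only [Pi.add_apply, Pi.smul_apply, smul_eq_mul]
      have m1 := mul_nonneg (by linarith : (0:ℚ) ≤ 1 - s) e1
      have m2 := mul_nonneg hs0 e2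
      linarith
    · refine ⟨s • u + v, ?_⟩
      funext q
      simp only [map_add, map_smul, Pi.add_apply, Pi.smul_apply, smul_eq_mul,
        Pi.sub_apply]
      rw [hu q]
      ring
end

section
/- Let n ≥ 4 and let B = (B',B'') be a partition of {1,…,n} into disjoint sets with #B' ≥ 2 and #B'' ≥ 2. Let Δ(2,n) ⊂ ℚ^n be the convex hull of the points e_i + e_j over all 1 ≤ i < j ≤ n. Then Δ(2,n) equals the union of Δ'_B := conv{e_i + e_j : i < j, {i,j} ∩ B' ≠ ∅} and Δ''_B := conv{e_i + e_j : i < j, {i,j} ∩ B'' ≠ ∅}, and the intersection Δ'_B ∩ Δ''_B equals conv{e_i + e_j : i ∈ B', j ∈ B''}. (This is the matroid subdivision of the hypersimplex Δ(2,n) induced by the element c^B, from Lemma 6.1.) -/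
/-- The vertex set `{e_i + e_j : 1 ≤ i < j ≤ n}` of the hypersimplex `Δ(2,n)`. -/
def hypersimplexGens (n : ℕ) : Set (Fin n → ℚ) :=
  {x | ∃ i j : Fin n, i < j ∧ x = Pi.single i 1 + Pi.single j 1}

/-- The generators `{e_i + e_j : i < j, {i,j} ∩ B ≠ ∅}` of the big cell `Δ(2,n)_B`. -/
def cellGens (n : ℕ) (B : Finset (Fin n)) : Set (Fin n → ℚ) :=
  {x | ∃ i j : Fin n, i < j ∧ (i ∈ B ∨ j ∈ B) ∧ x = Pi.single i 1 + Pi.single j 1}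

/-- The generators `{e_i + e_j : i ∈ B', j ∈ B''}` of the common facet. -/
def crossGens (n : ℕ) (B' B'' : Finset (Fin n)) : Set (Fin n → ℚ) :=
  {x | ∃ i j : Fin n, i ∈ B' ∧ j ∈ B'' ∧ x = Pi.single i 1 + Pi.single j 1}

namespace HSAux

open Finset Pointwise

variable {n : ℕ}

/-- Sum-of-coordinates-over-`C` linear functional. -/
def F (C : Finset (Fin n)) : (Fin n → ℚ) →ₗ[ℚ] ℚ :=
  ∑ i ∈ C, LinearMap.proj i

lemma F_apply (C : Finset (Fin n)) (x : Fin n → ℚ) : F C x = ∑ i ∈ C, x i := by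
  simp [F]

lemma F_single (C : Finset (Fin n)) (i : Fin n) :
    F C (Pi.single i 1) = if i ∈ C then 1 else 0 := by
  rw [F_apply]
  simp [Pi.single_apply]

lemma F_pair (C : Finset (Fin n)) (i j : Fin n) :
    F C (Pi.single i 1 + Pi.single j 1) =
      (if i ∈ C then 1 else 0) + (if j ∈ C then 1 else 0) := by
  rw [map_add, F_single, F_single]

lemma hull_F_ge {s : Set (Fin n → ℚ)} (C : Finset (Fin n)) (r : ℚ)
    (h : ∀ v ∈ s, r ≤ F C v) : ∀ x ∈ convexHull ℚ s, r ≤ F C x := fun _x hx =>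
  convexHull_min h (convex_halfSpace_ge (F C).isLinear r) hx

lemma hull_F_le {s : Set (Fin n → ℚ)} (C : Finset (Fin n)) (r : ℚ)
    (h : ∀ v ∈ s, F C v ≤ r) : ∀ x ∈ convexHull ℚ s, F C x ≤ r := fun _x hx =>
  convexHull_min h (convex_halfSpace_le (F C).isLinear r) hx

lemma mem_cell {C : Finset (Fin n)} {i j : Fin n} (h : i ≠ j) (hm : i ∈ C ∨ j ∈ C) :
    Pi.single i 1 + Pi.single j 1 ∈ cellGens n C := by
  rcases h.lt_or_gt with h | h
  · exact ⟨i, j, h, hm, rfl⟩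
  · exact ⟨j, i, h, hm.symm, add_comm _ _⟩

/-- Generators with both indices in `C`. -/
def bothGens (C : Finset (Fin n)) : Set (Fin n → ℚ) :=
  {v | ∃ i j : Fin n, i ≠ j ∧ i ∈ C ∧ j ∈ C ∧ v = Pi.single i 1 + Pi.single j 1}

lemma bothGens_subset_cell (C : Finset (Fin n)) :
    bothGens C ⊆ cellGens n C := by
  rintro v ⟨i, j, hij, hiC, hjC, rfl⟩
  exact mem_cell hij (Or.inl hiC)

lemma half_add_mem {C D : Finset (Fin n)} (hdisj : Disjoint C D) {y z : Fin n → ℚ}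
    (hy : y ∈ convexHull ℚ (bothGens D)) (hz : z ∈ convexHull ℚ (bothGens C)) :
    (2:ℚ)⁻¹ • (y + z) ∈ convexHull ℚ (cellGens n C) := by
  have hadd : y + z ∈ convexHull ℚ (bothGens D + bothGens C) := by
    rw [convexHull_add]
    exact Set.add_mem_add hy hz
  have hconv : Convex ℚ {v : Fin n → ℚ | (2:ℚ)⁻¹ • v ∈ convexHull ℚ (cellGens n C)} :=
    (convex_convexHull ℚ _).is_linear_preimage (IsLinearMap.isLinearMap_smul _)
  have hsub : convexHull ℚ (bothGens D + bothGens C) ⊆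
      {v | (2:ℚ)⁻¹ • v ∈ convexHull ℚ (cellGens n C)} := by
    apply convexHull_min _ hconv
    rintro v ⟨v0, h0, v2, h2, rfl⟩
    obtain ⟨i, j, hij, hiD, hjD, rfl⟩ := h0
    obtain ⟨k, l, hkl, hkC, hlC, rfl⟩ := h2
    have hki : k ≠ i := fun h => (Finset.disjoint_left.mp hdisj hkC (h ▸ hiD))
    have hlj : l ≠ j := fun h => (Finset.disjoint_left.mp hdisj hlC (h ▸ hjD))
    have e1 : Pi.single k (1:ℚ) + Pi.single i 1 ∈ cellGens n C := mem_cell hki (Or.inl hkC)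
    have e2 : Pi.single l (1:ℚ) + Pi.single j 1 ∈ cellGens n C := mem_cell hlj (Or.inl hlC)
    have heq : (2:ℚ)⁻¹ • ((Pi.single i (1:ℚ) + Pi.single j 1 : Fin n → ℚ)
          + (Pi.single k 1 + Pi.single l 1)) =
        (2:ℚ)⁻¹ • (Pi.single k (1:ℚ) + Pi.single i 1 : Fin n → ℚ) +
          (2:ℚ)⁻¹ • (Pi.single l (1:ℚ) + Pi.single j 1 : Fin n → ℚ) := by
      module
    show (2:ℚ)⁻¹ • ((Pi.single i (1:ℚ) + Pi.single j 1 : Fin n → ℚ)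
        + (Pi.single k 1 + Pi.single l 1)) ∈ convexHull ℚ (cellGens n C)
    rw [heq]
    exact (convex_convexHull ℚ _) (subset_convexHull ℚ _ e1) (subset_convexHull ℚ _ e2)
      (by norm_num) (by norm_num) (by norm_num)
  exact hsub hadd

lemma core (C D : Finset (Fin n)) (hdisj : Disjoint C D) (hcover : C ∪ D = Finset.univ)
    (hC : 2 ≤ C.card) (hD : 2 ≤ D.card) {x : Fin n → ℚ}
    (hx : x ∈ convexHull ℚ (hypersimplexGens n)) (hfx : 1 ≤ F C x) :
    x ∈ convexHull ℚ (cellGens n C) := by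
  classical
  rw [_root_.convexHull_eq] at hx
  obtain ⟨ι, t, w, z, hw0, hw1, hz, hcm⟩ := hx
  have hxeq : ∑ k ∈ t, w k • z k = x := by
    rw [← hcm, Finset.centerMass_eq_of_sum_1 _ _ hw1]
  have hmemD : ∀ i : Fin n, i ∉ C → i ∈ D := by
    intro i hi
    have h := Finset.mem_univ i
    rw [← hcover, Finset.mem_union] at h
    tauto
  have hval : ∀ k ∈ t, F C (z k) = 0 ∨ F C (z k) = 1 ∨ F C (z k) = 2 := by
    intro k hk
    obtain ⟨i, j, hij, he⟩ := hz k hk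
    rw [he, F_pair]
    by_cases h1 : i ∈ C <;> by_cases h2 : j ∈ C <;> simp [h1, h2] <;> norm_num
  set t0 := t.filter (fun k => F C (z k) = 0) with ht0
  set t1 := t.filter (fun k => F C (z k) = 1) with ht1
  set t2 := t.filter (fun k => F C (z k) = 2) with ht2
  have hsplit : ∀ {M : Type} [AddCommMonoid M] (g : ι → M),
      ∑ k ∈ t, g k = ∑ k ∈ t0, g k + ∑ k ∈ t1, g k + ∑ k ∈ t2, g k := by
    intro M _ g
    rw [← Finset.sum_filter_add_sum_filter_not t (fun k => F C (z k) = 0) g]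
    rw [← Finset.sum_filter_add_sum_filter_not (t.filter (fun k => ¬ F C (z k) = 0))
      (fun k => F C (z k) = 1) g, Finset.filter_filter, Finset.filter_filter]
    have e1 : t.filter (fun k => ¬ F C (z k) = 0 ∧ F C (z k) = 1) = t1 := by
      apply Finset.filter_congr
      intro k hk
      constructor
      · exact fun h => h.2
      · intro h; exact ⟨by rw [h]; norm_num, h⟩
    have e2 : t.filter (fun k => ¬ F C (z k) = 0 ∧ ¬ F C (z k) = 1) = t2 := by
      apply Finset.filter_congr
      intro k hk
      constructor
      · intro h
        rcases hval k hk with h0 | h1 | h2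
        · exact absurd h0 h.1
        · exact absurd h1 h.2
        · exact h2
      · intro h; exact ⟨by rw [h]; norm_num, by rw [h]; norm_num⟩
    rw [e1, e2, add_assoc]
  set a := ∑ k ∈ t0, w k with ha
  set c := ∑ k ∈ t1, w k with hc
  set b := ∑ k ∈ t2, w k with hb
  have ha0 : 0 ≤ a := Finset.sum_nonneg fun k hk => hw0 k (Finset.filter_subset _ _ hk)
  have hb0 : 0 ≤ b := Finset.sum_nonneg fun k hk => hw0 k (Finset.filter_subset _ _ hk)
  have hc0 : 0 ≤ c := Finset.sum_nonneg fun k hk => hw0 k (Finset.filter_subset _ _ hk)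
  have habc : a + c + b = 1 := by rw [ha, hc, hb, ← hsplit w, hw1]
  have hFx : F C x = c + 2 * b := by
    rw [← hxeq, map_sum]
    simp_rw [map_smul, smul_eq_mul]
    rw [hsplit (fun k => w k * F C (z k))]
    have h0 : ∑ k ∈ t0, w k * F C (z k) = 0 :=
      Finset.sum_eq_zero fun k hk => by
        rw [(Finset.mem_filter.mp hk).2, mul_zero]
    have h1 : ∑ k ∈ t1, w k * F C (z k) = c :=
      Finset.sum_congr rfl fun k hk => by
        rw [(Finset.mem_filter.mp hk).2, mul_one]
    have h2 : ∑ k ∈ t2, w k * F C (z k) = 2 * b := by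
      rw [Finset.mul_sum]
      exact Finset.sum_congr rfl fun k hk => by
        rw [(Finset.mem_filter.mp hk).2]; ring
    rw [h0, h1, h2, zero_add]
  have hba : a ≤ b := by
    have : 1 ≤ c + 2 * b := hFx ▸ hfx
    linarith
  obtain ⟨iC, hiC, jC, hjC, hijC⟩ := Finset.one_lt_card.mp (by omega : 1 < C.card)
  obtain ⟨iD, hiD, jD, hjD, hijD⟩ := Finset.one_lt_card.mp (by omega : 1 < D.card)
  have hpt0 : (Pi.single iD 1 + Pi.single jD 1 : Fin n → ℚ) ∈ bothGens D :=
    ⟨iD, jD, hijD, hiD, hjD, rfl⟩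
  have hpt2 : (Pi.single iC 1 + Pi.single jC 1 : Fin n → ℚ) ∈ bothGens C :=
    ⟨iC, jC, hijC, hiC, hjC, rfl⟩
  have hpt1 : (Pi.single iC 1 + Pi.single jC 1 : Fin n → ℚ) ∈ cellGens n C :=
    mem_cell hijC (Or.inl hiC)
  -- the three sub-barycenters
  set y0 : Fin n → ℚ := if 0 < a then t0.centerMass w z else Pi.single iD 1 + Pi.single jD 1
    with hy0def
  set y1 : Fin n → ℚ := if 0 < c then t1.centerMass w z else Pi.single iC 1 + Pi.single jC 1
    with hy1def
  set y2 : Fin n → ℚ := if 0 < b then t2.centerMass w z else Pi.single iC 1 + Pi.single jC 1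
    with hy2def
  have hz0 : ∀ k ∈ t0, z k ∈ bothGens D := by
    intro k hk
    obtain ⟨hkt, hF⟩ := Finset.mem_filter.mp hk
    obtain ⟨i, j, hij, he⟩ := hz k hkt
    rw [he, F_pair] at hF
    have hi : i ∉ C := by intro h; by_cases h2 : j ∈ C <;> simp [h, h2] at hF
    have hj : j ∉ C := by intro h; by_cases h2 : i ∈ C <;> simp [h, h2] at hF
    exact ⟨i, j, hij.ne, hmemD i hi, hmemD j hj, he⟩
  have hz2 : ∀ k ∈ t2, z k ∈ bothGens C := by
    intro k hk
    obtain ⟨hkt, hF⟩ := Finset.mem_filter.mp hk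
    obtain ⟨i, j, hij, he⟩ := hz k hkt
    rw [he, F_pair] at hF
    have hi : i ∈ C := by by_contra h; by_cases h2 : j ∈ C <;> simp [h, h2] at hF
    have hj : j ∈ C := by by_contra h; by_cases h2 : i ∈ C <;> simp [h, h2] at hF
    exact ⟨i, j, hij.ne, hi, hj, he⟩
  have hz1 : ∀ k ∈ t1, z k ∈ cellGens n C := by
    intro k hk
    obtain ⟨hkt, hF⟩ := Finset.mem_filter.mp hk
    obtain ⟨i, j, hij, he⟩ := hz k hkt
    rw [he, F_pair] at hF
    have hor : i ∈ C ∨ j ∈ C := by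
      by_contra h
      push_neg at h
      simp [h.1, h.2] at hF
    exact ⟨i, j, hij, hor, he⟩
  have hy0 : y0 ∈ convexHull ℚ (bothGens D) := by
    rw [hy0def]
    split_ifs with h
    · exact Finset.centerMass_mem_convexHull _ (fun k hk => hw0 k (Finset.filter_subset _ _ hk))
        h hz0
    · exact subset_convexHull ℚ _ hpt0
  have hy2 : y2 ∈ convexHull ℚ (bothGens C) := by
    rw [hy2def]
    split_ifs with h
    · exact Finset.centerMass_mem_convexHull _ (fun k hk => hw0 k (Finset.filter_subset _ _ hk))
        h hz2
    · exact subset_convexHull ℚ _ hpt2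
  have hy1 : y1 ∈ convexHull ℚ (cellGens n C) := by
    rw [hy1def]
    split_ifs with h
    · exact Finset.centerMass_mem_convexHull _ (fun k hk => hw0 k (Finset.filter_subset _ _ hk))
        h hz1
    · exact subset_convexHull ℚ _ hpt1
  have hsmul : ∀ (s : Finset ι) (p : Fin n → ℚ),
      (if 0 < ∑ k ∈ s, w k then s.centerMass w z else p) ∈ Set.univ →
      True := fun _ _ _ => trivial
  have key : ∀ (s : Finset ι) (hsub : s ⊆ t) (p : Fin n → ℚ),
      ∑ k ∈ s, w k • z k =
        (∑ k ∈ s, w k) • (if 0 < ∑ k ∈ s, w k then s.centerMass w z else p) := by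
    intro s hsub p
    split_ifs with h
    · rw [Finset.centerMass, smul_smul, mul_inv_cancel₀ (ne_of_gt h), one_smul]
    · have hz' : ∑ k ∈ s, w k = 0 :=
        le_antisymm (not_lt.mp h) (Finset.sum_nonneg fun k hk => hw0 k (hsub hk))
      rw [hz', zero_smul]
      apply Finset.sum_eq_zero
      intro k hk
      have : w k = 0 := by
        have := (Finset.sum_eq_zero_iff_of_nonneg (fun k hk => hw0 k (hsub hk))).mp hz' k hk
        exact this
      rw [this, zero_smul]
  have hs0 : ∑ k ∈ t0, w k • z k = a • y0 := key t0 (Finset.filter_subset _ _) _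
  have hs1 : ∑ k ∈ t1, w k • z k = c • y1 := key t1 (Finset.filter_subset _ _) _
  have hs2 : ∑ k ∈ t2, w k • z k = b • y2 := key t2 (Finset.filter_subset _ _) _
  have hxsum : x = a • y0 + c • y1 + b • y2 := by
    rw [← hxeq, hsplit (fun k => w k • z k), hs0, hs1, hs2]
  have hp : (2:ℚ)⁻¹ • (y0 + y2) ∈ convexHull ℚ (cellGens n C) := half_add_mem hdisj hy0 hy2
  have hy2' : y2 ∈ convexHull ℚ (cellGens n C) :=
    convexHull_mono (bothGens_subset_cell C) hy2
  have hK : Convex ℚ (convexHull ℚ (cellGens n C)) := convex_convexHull ℚ _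
  have hfinal := hK.sum_mem (t := (Finset.univ : Finset (Fin 3)))
    (w := ![2 * a, b - a, c]) (z := ![(2:ℚ)⁻¹ • (y0 + y2), y2, y1])
    (by intro i _; fin_cases i <;> simp <;> linarith)
    (by simp [Fin.sum_univ_three]; linarith)
    (by
      intro i _
      fin_cases i
      · simpa [smul_add] using hp
      · simpa using hy2'
      · simpa using hy1)
  rw [Fin.sum_univ_three] at hfinal
  simp only [Matrix.cons_val_zero, Matrix.cons_val_one, Matrix.head_cons,
    Matrix.cons_val_two, Matrix.tail_cons] at hfinal
  have : (2 * a) • ((2:ℚ)⁻¹ • (y0 + y2)) + (b - a) • y2 + c • y1 = a • y0 + c • y1 + b • y2 := by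
    module
  rw [this] at hfinal
  rw [hxsum]
  exact hfinal

end HSAux

open HSAux in
/-- Lemma 6.1 (second part): the matroid subdivision of the hypersimplex `Δ(2,n)`
induced by a partition `B = (B', B'')` with `#B', #B'' ≥ 2`:
`Δ(2,n) = Δ'_B ∪ Δ''_B` and `Δ'_B ∩ Δ''_B = conv{e_i + e_j : i ∈ B', j ∈ B''}`. -/
theorem hypersimplex_matroid_subdivision
    (n : ℕ) (hn : 4 ≤ n) (B' B'' : Finset (Fin n))
    (hdisj : Disjoint B' B'') (hcover : B' ∪ B'' = Finset.univ)
    (hB' : 2 ≤ B'.card) (hB'' : 2 ≤ B''.card) :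
    convexHull ℚ (hypersimplexGens n) =
        convexHull ℚ (cellGens n B') ∪ convexHull ℚ (cellGens n B'') ∧
      convexHull ℚ (cellGens n B') ∩ convexHull ℚ (cellGens n B'') =
        convexHull ℚ (crossGens n B' B'') := by
  classical
  have hcell_sub : ∀ C : Finset (Fin n), cellGens n C ⊆ hypersimplexGens n := by
    rintro C v ⟨i, j, hij, _, he⟩
    exact ⟨i, j, hij, he⟩
  have hmemB'' : ∀ i : Fin n, i ∉ B' → i ∈ B'' := by
    intro i hi
    have h := Finset.mem_univ i
    rw [← hcover, Finset.mem_union] at h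
    tauto
  have hmemB' : ∀ i : Fin n, i ∉ B'' → i ∈ B' := by
    intro i hi
    have h := Finset.mem_univ i
    rw [← hcover, Finset.mem_union] at h
    tauto
  -- total coordinate sum is 2 on the hypersimplex
  have htot_le : ∀ x ∈ convexHull ℚ (hypersimplexGens n), F Finset.univ x ≤ 2 := by
    apply hull_F_le
    rintro v ⟨i, j, hij, rfl⟩
    rw [F_pair]
    simp only [Finset.mem_univ, if_true]
    norm_num
  have htot_ge : ∀ x ∈ convexHull ℚ (hypersimplexGens n), 2 ≤ F Finset.univ x := by
    apply hull_F_ge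
    rintro v ⟨i, j, hij, rfl⟩
    rw [F_pair]
    simp only [Finset.mem_univ, if_true]
    norm_num
  have hFsum : ∀ x : Fin n → ℚ, F B' x + F B'' x = F Finset.univ x := by
    intro x
    rw [F_apply, F_apply, F_apply, ← Finset.sum_union hdisj, hcover]
  constructor
  · apply Set.Subset.antisymm
    · intro x hx
      have htot : F Finset.univ x = 2 := le_antisymm (htot_le x hx) (htot_ge x hx)
      rcases le_or_gt 1 (F B' x) with h | h
      · exact Or.inl (core B' B'' hdisj hcover hB' hB'' hx h)
      · refine Or.inr (core B'' B' hdisj.symm (by rw [Finset.union_comm]; exact hcover)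
          hB'' hB' hx ?_)
        have := hFsum x
        linarith
    · apply Set.union_subset <;> exact convexHull_mono (hcell_sub _)
  · apply Set.Subset.antisymm
    · rintro x ⟨hx1, hx2⟩
      -- F B' x = 1
      have hge1 : 1 ≤ F B' x := by
        refine hull_F_ge B' 1 ?_ x hx1
        rintro v ⟨i, j, hij, hor, rfl⟩
        rw [F_pair]
        rcases hor with h | h
        · simp only [h, if_true]
          split_ifs <;> norm_num
        · simp only [h, if_true]
          split_ifs <;> norm_num
      have hge2 : 1 ≤ F B'' x := by
        refine hull_F_ge B'' 1 ?_ x hx2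
        rintro v ⟨i, j, hij, hor, rfl⟩
        rw [F_pair]
        rcases hor with h | h
        · simp only [h, if_true]
          split_ifs <;> norm_num
        · simp only [h, if_true]
          split_ifs <;> norm_num
      have htot : F Finset.univ x = 2 := by
        have hx' : x ∈ convexHull ℚ (hypersimplexGens n) :=
          convexHull_mono (hcell_sub B') hx1
        exact le_antisymm (htot_le x hx') (htot_ge x hx')
      have hF1 : F B' x = 1 := by
        have := hFsum x
        linarith
      -- extract a representation from hull of cellGens B'
      rw [_root_.convexHull_eq] at hx1
      obtain ⟨ι, t, w, z, hw0, hw1, hzm, hcm⟩ := hx1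
      have hxeq : ∑ k ∈ t, w k • z k = x := by
        rw [← hcm, Finset.centerMass_eq_of_sum_1 _ _ hw1]
      have hge : ∀ k ∈ t, 1 ≤ F B' (z k) := by
        intro k hk
        obtain ⟨i, j, hij, hor, he⟩ := hzm k hk
        rw [he, F_pair]
        rcases hor with h | h
        · simp only [h, if_true]; split_ifs <;> norm_num
        · simp only [h, if_true]; split_ifs <;> norm_num
      have hsum1 : ∑ k ∈ t, w k * F B' (z k) = 1 := by
        rw [← hF1, ← hxeq, map_sum]
        simp_rw [map_smul, smul_eq_mul]
      have hzero : ∑ k ∈ t, w k * (F B' (z k) - 1) = 0 := by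
        simp_rw [mul_sub, mul_one, Finset.sum_sub_distrib, hsum1, hw1, sub_self]
      have hterm : ∀ k ∈ t, w k * (F B' (z k) - 1) = 0 :=
        (Finset.sum_eq_zero_iff_of_nonneg (fun k hk =>
          mul_nonneg (hw0 k hk) (by linarith [hge k hk]))).mp hzero
      have hcross : ∀ k ∈ t, w k ≠ 0 → z k ∈ crossGens n B' B'' := by
        intro k hk hwk
        have hF : F B' (z k) = 1 := by
          have := hterm k hk
          rcases mul_eq_zero.mp this with h | h
          · exact absurd h hwk
          · linarith
        obtain ⟨i, j, hij, hor, he⟩ := hzm k hk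
        rw [he, F_pair] at hF
        rcases hor with h | h
        · have hj : j ∉ B' := by
            intro hj
            simp [h, hj] at hF
          exact ⟨i, j, h, hmemB'' j hj, he⟩
        · have hi : i ∉ B' := by
            intro hi
            simp [h, hi] at hF
          refine ⟨j, i, h, hmemB'' i hi, ?_⟩
          rw [he, add_comm]
      set t' := t.filter (fun k => w k ≠ 0) with ht'
      have hsum_eq : ∑ k ∈ t', w k • z k = ∑ k ∈ t, w k • z k :=
        Finset.sum_filter_of_ne (fun k _ h => fun hw => h (by rw [hw, zero_smul]))
      have hw1' : ∑ k ∈ t', w k = 1 := by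
        rw [Finset.sum_filter_of_ne (fun k _ h => h), hw1]
      have := (convex_convexHull ℚ (crossGens n B' B'')).sum_mem
        (t := t') (w := w) (z := z)
        (fun k hk => hw0 k (Finset.filter_subset _ _ hk)) hw1'
        (fun k hk => subset_convexHull ℚ _
          (hcross k (Finset.mem_filter.mp hk).1 (Finset.mem_filter.mp hk).2))
      rwa [hsum_eq, hxeq] at this
    · apply Set.subset_inter <;>
      · apply convexHull_mono
        rintro v ⟨i, j, hi, hj, rfl⟩
        have hne : i ≠ j := fun h => Finset.disjoint_left.mp hdisj hi (h ▸ hj)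
        first
        | exact mem_cell hne (Or.inl hi)
        | exact mem_cell hne (Or.inr hj)
end

section
/- Let n ≥ 3 and define the linear map t : ℚ^P → ℚ^n by t(E^{ij}) = (e^i + e^j)/(n−2) − 𝟙/((n−2)(n−1)), where 𝟙 = (1,…,1) ∈ ℚ^n. Then t ∘ deg* is the identity on ℚ^n; that is, t is a (rational) retraction of the weight map deg*. (This is the canonical symmetric section used in Proposition 6.2.) -/
/-- The basis vector `E^{ij} = E^{ji}` of `ℚ^P` (for `i ≠ j`). -/
def EPair {n : ℕ} (i j : Fin n) : PluckerPairs n → ℚ :=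
  fun q => if (q : Fin n × Fin n) = (i, j) ∨ (q : Fin n × Fin n) = (j, i) then 1 else 0

/-! Since `deg*(e^k) = Σ_{j ≠ k} E^{kj}` and `Σ_{j ≠ k} (e^k + e^j) = (n - 2) e^k + 𝟙`, the map `t`
sends `deg*(e^k)` to `e^k + 𝟙/(n-2) - (n-1) 𝟙/((n-2)(n-1)) = e^k`; by linearity `t ∘ deg* = id`. -/

theorem EPair_self {n : ℕ} (i : Fin n) : EPair i i = 0 := by
  funext ⟨q, hq⟩
  simp only [EPair, or_self, Pi.zero_apply, ite_eq_right_iff, one_ne_zero, imp_false]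
  rintro rfl
  exact lt_irrefl _ hq

theorem degStar_single {n : ℕ} (k : Fin n) :
    degStar n (Pi.single k 1) = ∑ j ∈ Finset.univ.erase k, EPair k j := by
  rw [Finset.sum_erase _ (EPair_self k)]
  funext ⟨⟨a, b⟩, hab⟩
  have hba : b ≠ a := hab.ne'
  simp only [EPair, degStar, Finset.sum_apply, LinearMap.coe_mk, AddHom.coe_mk, Prod.mk.injEq,
    Pi.single_apply]
  rcases eq_or_ne a k with rfl | hak
  · simp [hba]
  · rcases eq_or_ne b k with rfl | hbk
    · simp [hak]
    · simp [hak, hbk]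

theorem sum_erase_single_add_single {ι R : Type*} [Fintype ι] [DecidableEq ι] [CommRing R]
    (k : ι) :
    ∑ j ∈ Finset.univ.erase k, (Pi.single k 1 + Pi.single j 1 : ι → R)
      = ((Fintype.card ι : R) - 2) • Pi.single k 1 + 1 := by
  rw [Finset.sum_add_distrib, Finset.sum_const, Finset.card_erase_of_mem (Finset.mem_univ _),
    Finset.sum_erase_eq_sub (Finset.mem_univ _), Finset.univ_sum_single, Finset.card_univ,
    ← Nat.cast_smul_eq_nsmul R, Nat.cast_pred (Fintype.card_pos_iff.mpr ⟨k⟩)]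
  module

/-- The canonical symmetric rational retraction of Proposition 6.2: any linear map
`t : ℚ^P → ℚ^n` with `t(E^{ij}) = (e^i + e^j)/(n−2) − 𝟙/((n−2)(n−1))` satisfies
`t ∘ deg* = id`. -/
theorem retraction_of_degStar
    (n : ℕ) (hn : 3 ≤ n) (t : (PluckerPairs n → ℚ) →ₗ[ℚ] (Fin n → ℚ))
    (ht : ∀ i j : Fin n, i ≠ j →
      t (EPair i j) = ((n : ℚ) - 2)⁻¹ • (Pi.single i 1 + Pi.single j 1)
        - (((n : ℚ) - 2) * ((n : ℚ) - 1))⁻¹ • (fun _ : Fin n => (1 : ℚ))) :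
    ∀ v : Fin n → ℚ, t (degStar n v) = v := by
  have h3 : (3 : ℚ) ≤ n := by exact_mod_cast hn
  have hn2 : (n : ℚ) - 2 ≠ 0 := by linarith
  have hcoef : ((n : ℚ) - 1) * (((n : ℚ) - 2) * ((n : ℚ) - 1))⁻¹ = ((n : ℚ) - 2)⁻¹ := by
    field_simp [show (n : ℚ) - 1 ≠ 0 by linarith]
  suffices t ∘ₗ degStar n = LinearMap.id from fun v => LinearMap.congr_fun this v
  refine (Pi.basisFun ℚ (Fin n)).ext fun k => ?_
  rw [Pi.basisFun_apply, LinearMap.comp_apply, LinearMap.id_apply]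
  calc t (degStar n (Pi.single k 1))
      = ∑ j ∈ Finset.univ.erase k, t (EPair k j) := by rw [degStar_single, map_sum]
    _ = ((n : ℚ) - 2)⁻¹ • (((n : ℚ) - 2) • Pi.single k 1 + 1)
          - ((n : ℚ) - 1) • (((n : ℚ) - 2) * ((n : ℚ) - 1))⁻¹ • 1 := by
      rw [Finset.sum_congr rfl fun j hj => ht k j (Finset.ne_of_mem_erase hj).symm,
        Finset.sum_sub_distrib, ← Finset.smul_sum, sum_erase_single_add_single, Fintype.card_fin,
        Finset.sum_const, Finset.card_erase_of_mem (Finset.mem_univ _), Finset.card_univ,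
        Fintype.card_fin, ← Nat.cast_smul_eq_nsmul ℚ, Nat.cast_pred (by omega), Pi.one_def]
    _ = Pi.single k 1 := by
      rw [smul_add, smul_smul, inv_mul_cancel₀ hn2, one_smul, smul_smul, hcoef,
        add_sub_cancel_right]
end

section
/- Let n ≥ 4, let B = (B',B'') be a partition of {1,…,n} into disjoint sets with #B' ≥ 2 and #B'' ≥ 2, and set b := #B'. Let t : ℚ^P → ℚ^n be the linear map with t(E^{ij}) = (e^i + e^j)/(n−2) − 𝟙/((n−2)(n−1)). Then the image under t of the set {P ∈ ℚ^P : P ≥ 0 and P − E^{B'} ∈ range(deg*)} equals the set { ((b−1)/(n−2))·e^{B'} − ((b−1)·b/(2(n−2)(n−1)))·𝟙 + (s/2)·(e^{B''} − e^{B'}) + v : s ∈ ℚ, 0 ≤ s ≤ 1, v ∈ ℚ^n with deg*(v) ≥ 0 }. (This identifies the polyhedral coefficient Δ_B of the pp-divisor describing the affine cone over Gr(2,n), Proposition 6.2.) -/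
/-- `e^S = Σ_{i ∈ S} e^i`, the indicator vector of `S` in `ℚ^n`. -/
def eSet {n : ℕ} (S : Finset (Fin n)) : Fin n → ℚ :=
  fun i => if i ∈ S then 1 else 0

/-! `t` is a retraction of `deg*`, so the image of the fiber `E^{B'} + range deg*` is
`t(E^{B'}) + W` with `W = {w | E^{B'} + deg* w ≥ 0}`, and `t(E^{B'})` is the constant part of `Δ_B`.
On a pair `{i,j}` the condition on `w` reads `w_i + w_j ≥ -1` if `i, j ∈ B'` and `w_i + w_j ≥ 0`
otherwise. Writing `w = (s/2)(e^{B''} - e^{B'}) + v` with `v` in the cone `deg* v ≥ 0`, the slack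
`s ∈ [0,1]` must lie above `-(w_i + w_j)` for pairs in `B'` and below `w_i + w_j` for pairs in `B''`;
it exists because the mixed pairs `{k,i}`, `{l,j}` (`k, l ∈ B'`, `i, j ∈ B''`) give
`w_i + w_j ≥ -(w_k + w_l)`. -/

open Finset

variable {n : ℕ}

lemma EPair_apply (i j : Fin n) (q : PluckerPairs n) :
    EPair i j q = (if q.1.1 = i ∧ q.1.2 = j then 1 else 0)
      + (if q.1.2 = i ∧ q.1.1 = j then 1 else 0) := by
  obtain ⟨⟨a, b⟩, hab⟩ := q
  simp only [EPair, Prod.mk.injEq]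
  by_cases h₁ : a = i ∧ b = j <;> by_cases h₂ : b = i ∧ a = j <;> simp only [h₁, h₂] <;> grind

lemma two_smul_ESet (S : Finset (Fin n)) :
    (2 : ℚ) • ESet S = ∑ i ∈ S, ∑ j ∈ S.erase i, EPair i j := by
  ext ⟨⟨a, b⟩, hab⟩
  simp only [ESet, Pi.smul_apply, Finset.sum_apply, EPair_apply, Finset.sum_add_distrib,
    ite_and, sum_ite_irrel, sum_const_zero, sum_ite_eq, mem_erase]
  by_cases ha : a ∈ S <;> by_cases hb : b ∈ S <;> simp [ha, hb, hab.ne, hab.ne']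
  norm_num

lemma degStar_single_one (k : Fin n) :
    degStar n (Pi.single k 1) = ∑ j ∈ univ.erase k, EPair k j := by
  ext ⟨⟨a, b⟩, hab⟩
  simp only [degStar, LinearMap.coe_mk, AddHom.coe_mk, Finset.sum_apply, EPair_apply,
    Finset.sum_add_distrib, ite_and, sum_ite_irrel, sum_const_zero, sum_ite_eq, mem_erase,
    Pi.single_apply]
  obtain rfl | ha := eq_or_ne a k
  · simp [hab.ne']
  · by_cases hb : b = k <;> simp [ha, hb]

lemma eSet_eq_sum_single (S : Finset (Fin n)) : eSet S = ∑ i ∈ S, Pi.single i 1 := by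
  ext m
  simp [eSet, Finset.sum_apply, Pi.single_apply]

lemma eSet_erase {S : Finset (Fin n)} {i : Fin n} (hi : i ∈ S) :
    eSet (S.erase i) = eSet S - Pi.single i 1 := by
  rw [eSet_eq_sum_single, eSet_eq_sum_single, sum_erase_eq_sub hi]

def IsCanonicalRetraction (t : (PluckerPairs n → ℚ) →ₗ[ℚ] (Fin n → ℚ)) : Prop :=
  ∀ i j : Fin n, i ≠ j →
    t (EPair i j) = ((n : ℚ) - 2)⁻¹ • (Pi.single i 1 + Pi.single j 1)
      - (((n : ℚ) - 2) * ((n : ℚ) - 1))⁻¹ • (fun _ : Fin n => (1 : ℚ))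

namespace IsCanonicalRetraction

variable {t : (PluckerPairs n → ℚ) →ₗ[ℚ] (Fin n → ℚ)}

lemma map_sum_EPair (ht : IsCanonicalRetraction t) {k : Fin n} {T : Finset (Fin n)}
    (hk : k ∉ T) :
    t (∑ j ∈ T, EPair k j) = ((n : ℚ) - 2)⁻¹ • ((#T : ℚ) • Pi.single k 1 + eSet T)
      - ((#T : ℚ) * (((n : ℚ) - 2) * ((n : ℚ) - 1))⁻¹) • (fun _ : Fin n => (1 : ℚ)) := by
  rw [map_sum, sum_congr rfl fun j hj => ht k j (ne_of_mem_of_not_mem hj hk).symm,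
    sum_sub_distrib, ← smul_sum, sum_add_distrib, ← eSet_eq_sum_single]
  simp only [sum_const]
  module

lemma map_degStar (ht : IsCanonicalRetraction t) (hn : 3 ≤ n) (w : Fin n → ℚ) :
    t (degStar n w) = w := by
  suffices t ∘ₗ degStar n = LinearMap.id from LinearMap.congr_fun this w
  ext k : 2
  have hn' : (3 : ℚ) ≤ n := by exact_mod_cast hn
  have hn₂ : (n : ℚ) - 2 ≠ 0 := by linarith
  have hn₁ : (n : ℚ) - 1 ≠ 0 := by linarith
  have hcard : (#(univ.erase k) : ℚ) = n - 1 := by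
    rw [card_erase_of_mem (mem_univ k), card_univ, Fintype.card_fin, Nat.cast_pred (by omega)]
  have heSet : eSet (univ.erase k) = (fun _ => 1) - Pi.single k 1 := by
    ext m
    by_cases hm : m = k <;> simp [eSet, hm]
  simp only [LinearMap.comp_apply, LinearMap.coe_single, degStar_single_one,
    ht.map_sum_EPair (notMem_erase k univ), hcard, heSet, LinearMap.id_apply]
  match_scalars <;> field_simp <;> ring

lemma map_ESet (ht : IsCanonicalRetraction t) (S : Finset (Fin n)) :
    t (ESet S) = (((#S : ℚ) - 1) / ((n : ℚ) - 2)) • eSet S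
      - ((((#S : ℚ) - 1) * (#S : ℚ))
          / (2 * ((n : ℚ) - 2) * ((n : ℚ) - 1))) • (fun _ : Fin n => (1 : ℚ)) := by
  have h := congrArg t (two_smul_ESet S)
  have hcard : ∀ i ∈ S, (#(S.erase i) : ℚ) = #S - 1 := fun i hi => by
    rw [card_erase_of_mem hi, Nat.cast_pred (card_pos.mpr ⟨i, hi⟩)]
  rw [map_smul, map_sum, sum_congr rfl fun i hi => by
    rw [ht.map_sum_EPair (notMem_erase i S), hcard i hi, eSet_erase hi]] at h
  simp only [sum_sub_distrib, ← smul_sum, sum_add_distrib, sum_const, ← eSet_eq_sum_single] at h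
  rw [← inv_smul_smul₀ (two_ne_zero' ℚ) (t (ESet S)), h]
  match_scalars
  · ring
  · field_simp

end IsCanonicalRetraction

lemma forall_pluckerPairs_iff {p : Fin n → Fin n → Prop} (hp : ∀ i j, p i j → p j i) :
    (∀ q : PluckerPairs n, p q.1.1 q.1.2) ↔ ∀ i j, i ≠ j → p i j := by
  refine ⟨fun h i j hij => ?_, fun h q => h _ _ q.2.ne⟩
  rcases hij.lt_or_gt with hlt | hgt
  · exact h ⟨(i, j), hlt⟩
  · exact hp _ _ (h ⟨(j, i), hgt⟩)

lemma forall_degStar_nonneg_iff (v : Fin n → ℚ) :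
    (∀ q, 0 ≤ degStar n v q) ↔ ∀ i j, i ≠ j → 0 ≤ v i + v j :=
  forall_pluckerPairs_iff (p := fun i j => 0 ≤ v i + v j) fun i j h => by rwa [add_comm]

lemma forall_ESet_add_degStar_nonneg_iff (S : Finset (Fin n)) (w : Fin n → ℚ) :
    (∀ q, 0 ≤ ESet S q + degStar n w q) ↔
      ∀ i j, i ≠ j → 0 ≤ (if i ∈ S ∧ j ∈ S then 1 else 0) + (w i + w j) :=
  forall_pluckerPairs_iff (p := fun i j => 0 ≤ (if i ∈ S ∧ j ∈ S then 1 else 0) + (w i + w j))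
    fun i j h => by simpa only [and_comm, add_comm (w j)] using h

lemma exists_between_pair_sums {S : Finset (Fin n)} {w : Fin n → ℚ}
    (h : ∀ i j, i ≠ j → 0 ≤ (if i ∈ S ∧ j ∈ S then 1 else 0) + (w i + w j)) :
    ∃ s : ℚ, 0 ≤ s ∧ s ≤ 1 ∧ (∀ i ∈ S, ∀ j ∈ S, i ≠ j → -(w i + w j) ≤ s) ∧
      ∀ i ∉ S, ∀ j ∉ S, i ≠ j → s ≤ w i + w j := by
  set L := insert 0 (S.offDiag.image fun p => -(w p.1 + w p.2))
  have hL : ∀ y ∈ L, y = 0 ∨ ∃ i ∈ S, ∃ j ∈ S, i ≠ j ∧ y = -(w i + w j) := by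
    intro y hy
    obtain rfl | hy := mem_insert.mp hy
    · exact Or.inl rfl
    obtain ⟨⟨i, j⟩, hp, rfl⟩ := mem_image.mp hy
    obtain ⟨hi, hj, hij⟩ := mem_offDiag.mp hp
    exact Or.inr ⟨i, hi, j, hj, hij, rfl⟩
  refine ⟨L.max' (insert_nonempty _ _), le_max' _ _ (mem_insert_self _ _), ?_, ?_, ?_⟩
  · refine max'_le _ _ _ fun y hy => ?_
    obtain rfl | ⟨i, hi, j, hj, hij, rfl⟩ := hL y hy
    · exact zero_le_one
    · have := h i j hij
      simp only [hi, hj, and_self, if_true] at this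
      linarith
  · exact fun i hi j hj hij => L.le_max' _ (mem_insert_of_mem
      (mem_image_of_mem (fun p : Fin n × Fin n => -(w p.1 + w p.2))
        (show (i, j) ∈ S.offDiag from mem_offDiag.mpr ⟨hi, hj, hij⟩)))
  · intro i hi j hj hij
    refine max'_le _ _ _ fun y hy => ?_
    obtain rfl | ⟨k, hk, l, hl, -, rfl⟩ := hL y hy
    · simpa [hi] using h i j hij
    · have hki := h k i (ne_of_mem_of_not_mem hk hi)
      have hlj := h l j (ne_of_mem_of_not_mem hl hj)
      simp only [hi, hj, and_false, if_false, zero_add] at hki hlj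
      linarith

theorem forall_ESet_add_degStar_nonneg_iff_exists (S : Finset (Fin n)) (w : Fin n → ℚ) :
    (∀ q, 0 ≤ ESet S q + degStar n w q) ↔
      ∃ s : ℚ, ∃ v : Fin n → ℚ, 0 ≤ s ∧ s ≤ 1 ∧ (∀ q, 0 ≤ degStar n v q) ∧
        w = (s / 2) • (eSet Sᶜ - eSet S) + v := by
  rw [forall_ESet_add_degStar_nonneg_iff]
  constructor
  · intro h
    obtain ⟨s, hs₀, hs₁, hlower, hupper⟩ := exists_between_pair_sums h
    refine ⟨s, w - (s / 2) • (eSet Sᶜ - eSet S), hs₀, hs₁, ?_, (add_sub_cancel _ _).symm⟩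
    rw [forall_degStar_nonneg_iff]
    intro i j hij
    have hij' := h i j hij
    simp only [Pi.sub_apply, Pi.smul_apply, smul_eq_mul, eSet, mem_compl]
    by_cases hi : i ∈ S <;> by_cases hj : j ∈ S <;> simp only [hi, hj] at hij' ⊢ <;> norm_num at hij' ⊢
    · linarith [hlower i hi j hj hij]
    · linarith
    · linarith
    · linarith [hupper i hi j hj hij]
  · rintro ⟨s, v, hs₀, hs₁, hv, rfl⟩ i j hij
    have hvij := (forall_degStar_nonneg_iff v).mp hv i j hij
    simp only [Pi.add_apply, Pi.sub_apply, Pi.smul_apply, smul_eq_mul, eSet, mem_compl]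
    by_cases hi : i ∈ S <;> by_cases hj : j ∈ S <;> simp only [hi, hj] <;> norm_num <;> linarith

lemma image_fiber_eq_of_leftInverse {M N F : Type*} [AddCommGroup M] [AddCommGroup N]
    [FunLike F N M] [AddMonoidHomClass F N M] (t : F) (f : M → N)
    (htf : Function.LeftInverse t f) (p : N → Prop) (E : N) :
    t '' {P | p P ∧ P - E ∈ Set.range f} = {x | ∃ w, p (E + f w) ∧ x = t E + w} := by
  ext x
  constructor
  · rintro ⟨P, ⟨hP, w, hw⟩, rfl⟩
    obtain rfl : P = E + f w := by rw [hw, add_sub_cancel]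
    exact ⟨w, hP, by rw [map_add, htf]⟩
  · rintro ⟨w, hw, rfl⟩
    exact ⟨E + f w, ⟨hw, w, (add_sub_cancel_left _ _).symm⟩, by rw [map_add, htf]⟩

theorem image_of_positive_fiber_general
    (n : ℕ) (hn : 4 ≤ n) (B' B'' : Finset (Fin n))
    (hdisj : Disjoint B' B'') (hcover : B' ∪ B'' = Finset.univ)
    (t : (PluckerPairs n → ℚ) →ₗ[ℚ] (Fin n → ℚ))
    (ht : ∀ i j : Fin n, i ≠ j →
      t (EPair i j) = ((n : ℚ) - 2)⁻¹ • (Pi.single i 1 + Pi.single j 1)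
        - (((n : ℚ) - 2) * ((n : ℚ) - 1))⁻¹ • (fun _ : Fin n => (1 : ℚ))) :
    ⇑t '' {P : PluckerPairs n → ℚ |
        (∀ q, 0 ≤ P q) ∧ P - ESet B' ∈ Set.range (degStar n)} =
      {x : Fin n → ℚ | ∃ s : ℚ, ∃ v : Fin n → ℚ,
        0 ≤ s ∧ s ≤ 1 ∧ (∀ q, 0 ≤ degStar n v q) ∧
        x = (((B'.card : ℚ) - 1) / ((n : ℚ) - 2)) • eSet B'
          - ((((B'.card : ℚ) - 1) * (B'.card : ℚ))
              / (2 * ((n : ℚ) - 2) * ((n : ℚ) - 1))) • (fun _ : Fin n => (1 : ℚ))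
          + (s / 2) • (eSet B'' - eSet B') + v} := by
  replace ht : IsCanonicalRetraction t := ht
  obtain rfl : B'' = B'ᶜ := (IsCompl.of_eq hdisj.eq_bot hcover).compl_eq.symm
  rw [image_fiber_eq_of_leftInverse t (degStar n) (ht.map_degStar (by omega))
    (fun P => ∀ q, 0 ≤ P q), ht.map_ESet]
  ext x
  simp only [Set.mem_ofPred_eq, Pi.add_apply, forall_ESet_add_degStar_nonneg_iff_exists]
  constructor
  · rintro ⟨_, ⟨s, v, hs₀, hs₁, hv, rfl⟩, rfl⟩
    exact ⟨s, v, hs₀, hs₁, hv, (add_assoc _ _ _).symm⟩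
  · rintro ⟨s, v, hs₀, hs₁, hv, rfl⟩
    exact ⟨_, ⟨s, v, hs₀, hs₁, hv, rfl⟩, add_assoc _ _ _⟩

/-- Proposition 6.2: the image under the canonical retraction `t` of the positive
fiber `π^{-1}(c^B) ∩ ℚ^P_{≥0}` is the polyhedral coefficient
`Δ_B = ((b−1)/(n−2))·e^{B'} − ((b−1)b/(2(n−2)(n−1)))·𝟙 + ½·[0, e^{B''}−e^{B'}] + σ`
of the pp-divisor describing the affine cone over `Gr(2,n)`. -/
theorem image_of_positive_fiber
    (n : ℕ) (hn : 4 ≤ n) (B' B'' : Finset (Fin n))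
    (hdisj : Disjoint B' B'') (hcover : B' ∪ B'' = Finset.univ)
    (hB' : 2 ≤ B'.card) (hB'' : 2 ≤ B''.card)
    (t : (PluckerPairs n → ℚ) →ₗ[ℚ] (Fin n → ℚ))
    (ht : ∀ i j : Fin n, i ≠ j →
      t (EPair i j) = ((n : ℚ) - 2)⁻¹ • (Pi.single i 1 + Pi.single j 1)
        - (((n : ℚ) - 2) * ((n : ℚ) - 1))⁻¹ • (fun _ : Fin n => (1 : ℚ))) :
    ⇑t '' {P : PluckerPairs n → ℚ |
        (∀ q, 0 ≤ P q) ∧ P - ESet B' ∈ Set.range (degStar n)} =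
      {x : Fin n → ℚ | ∃ s : ℚ, ∃ v : Fin n → ℚ,
        0 ≤ s ∧ s ≤ 1 ∧ (∀ q, 0 ≤ degStar n v q) ∧
        x = (((B'.card : ℚ) - 1) / ((n : ℚ) - 2)) • eSet B'
          - ((((B'.card : ℚ) - 1) * (B'.card : ℚ))
              / (2 * ((n : ℚ) - 2) * ((n : ℚ) - 1))) • (fun _ : Fin n => (1 : ℚ))
          + (s / 2) • (eSet B'' - eSet B') + v} :=
  image_of_positive_fiber_general n hn B' B'' hdisj hcover t ht
end

section
/- Let n ≥ 2 and 1 ≤ k ≤ n−1, let w be a (k,n−k)-shuffle, and let σ be the permutation of {1,…,n} with σ(i) ≡ i − k (mod n). Then for all 1 ≤ i < j ≤ n with w^{-1}(i) > w^{-1}(j), one has σ(w^{-1}(i)) < σ(w^{-1}(j)). (This is the key claim v·R(w^{-1}) ⊆ R((w^I)^{-1}) with v = w^I w^{-1} in the proof of Lemma 3.1, which shows that the translates w·C of the shifted big cell cover G/P_I.) -/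
/-- A `(k,n−k)`-shuffle (indices written `0,…,n−1`): a permutation that is strictly
increasing on the block `{0,…,k−1}` and on the block `{k,…,n−1}`. -/
def IsShuffle (n k : ℕ) (w : Equiv.Perm (Fin n)) : Prop :=
  ∀ i j : Fin n, i < j → ((j : ℕ) < k ∨ k ≤ (i : ℕ)) → w i < w j

/-! An inversion `b < a`, `w a < w b` of a shuffle cannot lie inside one block, so `b < k ≤ a`.
The rotation `σ` is `x ↦ x - k` on the upper block and `x ↦ x + n - k` on the lower one, so it
moves the whole upper block below the lower block, and `σ a < σ b`. -/

theorem IsShuffle.lt_and_le_of_inversion {n k : ℕ} {w : Equiv.Perm (Fin n)}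
    (hw : IsShuffle n k w) {a b : Fin n} (hba : b < a) (hwab : w a < w b) :
    (b : ℕ) < k ∧ k ≤ (a : ℕ) :=
  ⟨lt_of_not_ge fun hb => (hw b a hba (Or.inr hb)).not_gt hwab,
    le_of_not_gt fun ha => (hw b a hba (Or.inl ha)).not_gt hwab⟩

def IsRotationBy (n k : ℕ) (σ : Fin n → Fin n) : Prop :=
  ∀ i : Fin n, (σ i : ℤ) ≡ (i : ℤ) - k [ZMOD n]

namespace IsRotationBy

variable {n k : ℕ} {σ : Fin n → Fin n}

theorem val_apply_of_le (hσ : IsRotationBy n k σ) {x : Fin n} (hx : k ≤ (x : ℕ)) :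
    (σ x : ℕ) = x - k := by
  have h : ((σ x : ℕ) : ℤ) ≡ ((x - k : ℕ) : ℤ) [ZMOD n] := by
    rw [Nat.cast_sub hx]
    exact hσ x
  exact (Int.natCast_modEq_iff.mp h).eq_of_lt_of_lt (σ x).isLt (by omega)

theorem val_apply_of_lt (hσ : IsRotationBy n k σ) (hkn : k ≤ n) {x : Fin n}
    (hx : (x : ℕ) < k) : (σ x : ℕ) = x + n - k := by
  have h : ((σ x : ℕ) : ℤ) ≡ ((x + n - k : ℕ) : ℤ) [ZMOD n] := by
    rw [Nat.cast_sub (by omega), Nat.cast_add, add_sub_right_comm]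
    exact Int.modEq_add_modulus_iff.mpr (hσ x)
  exact (Int.natCast_modEq_iff.mp h).eq_of_lt_of_lt (σ x).isLt (by omega)

theorem apply_lt_apply_of_lt_of_le (hσ : IsRotationBy n k σ) {a b : Fin n}
    (hb : (b : ℕ) < k) (ha : k ≤ (a : ℕ)) : σ a < σ b := by
  have hkn : k ≤ n := ha.trans a.isLt.le
  rw [Fin.lt_def, hσ.val_apply_of_le ha, hσ.val_apply_of_lt hkn hb]
  omega

end IsRotationBy

theorem shuffle_inverse_inversion_straightened_general
    (n k : ℕ)
    (w : Equiv.Perm (Fin n)) (hw : IsShuffle n k w)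
    (σ : Equiv.Perm (Fin n))
    (hσ : ∀ i : Fin n, Int.ModEq (n : ℤ) ((σ i : ℕ) : ℤ) (((i : ℕ) : ℤ) - (k : ℤ))) :
    ∀ i j : Fin n, i < j → w⁻¹ j < w⁻¹ i → σ (w⁻¹ i) < σ (w⁻¹ j) := by
  intro i j hij hinv
  obtain ⟨hb, ha⟩ := hw.lt_and_le_of_inversion hinv (by simpa using hij)
  exact IsRotationBy.apply_lt_apply_of_lt_of_le hσ hb ha

/-- The key claim `v·R(w^{-1}) ⊆ R((w^I)^{-1})` with `v = w^I w^{-1}` in the proof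
of Lemma 3.1, for `W = S_n`, `W_I = S_k × S_{n−k}`, `w^I = σ : i ↦ i − k (mod n)`:
for a shuffle `w` and `i < j` with `w^{-1}(i) > w^{-1}(j)`, one has
`σ(w^{-1}(i)) < σ(w^{-1}(j))`. -/
theorem shuffle_inverse_inversion_straightened
    (n k : ℕ) (hn : 2 ≤ n) (hk1 : 1 ≤ k) (hk2 : k ≤ n - 1)
    (w : Equiv.Perm (Fin n)) (hw : IsShuffle n k w)
    (σ : Equiv.Perm (Fin n))
    (hσ : ∀ i : Fin n, Int.ModEq (n : ℤ) ((σ i : ℕ) : ℤ) (((i : ℕ) : ℤ) - (k : ℤ))) :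
    ∀ i j : Fin n, i < j → w⁻¹ j < w⁻¹ i → σ (w⁻¹ i) < σ (w⁻¹ j) :=
  shuffle_inverse_inversion_straightened_general n k w hw σ hσ
end
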